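/- arXiv:2011.11119 — 5 statements merged into one kernel-verified Lean document; each statement's English description precedes it below -/
import Mathlib

section
/- For all integers n ≥ 4k with k ≥ 1, there exists a 2-coloring E(K_n) = R ⊔ B with |R| = (k-1)n - (k-1)² , |B| ≥ |R|, and such that no copy of the cycle C_{4k} in K_n has exactly 2k edges in R and 2k edges in B. -/
/-!
Colour red the edges between a set `A` of `k - 1` vertices and its complement. Every red edge has an
end in `A`, and a cycle passes through each vertex of `A` along only two of its edges, so a `C_{4k}`
has at most `2(k - 1) < 2k` red edges. The blue edges are the majority because
`4a(n - a) ≤ n(n - 1)` once `n ≥ 4a + 4`.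
-/

open Finset

namespace SimpleGraph

variable {V : Type*} [Fintype V] [DecidableEq V]

def cutEdges (A : Finset V) : Finset (Sym2 V) :=
  (A ×ˢ Aᶜ).image fun p => s(p.1, p.2)

variable {A : Finset V}

theorem mem_or_mem_of_mk_mem_cutEdges {a b : V} (h : s(a, b) ∈ cutEdges A) :
    a ∈ A ∨ b ∈ A := by
  obtain ⟨⟨x, y⟩, hxy, he⟩ := mem_image.mp h
  rcases Sym2.eq_iff.mp he with ⟨rfl, -⟩ | ⟨rfl, -⟩
  · exact .inl (mem_product.mp hxy).1
  · exact .inr (mem_product.mp hxy).1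

theorem cutEdges_subset_edgeFinset_top : cutEdges A ⊆ (⊤ : SimpleGraph V).edgeFinset := by
  intro e he
  obtain ⟨⟨x, y⟩, hxy, rfl⟩ := mem_image.mp he
  rw [mem_product, mem_compl] at hxy
  simpa using ne_of_mem_of_not_mem hxy.1 hxy.2

theorem card_cutEdges : #(cutEdges A) = #A * (Fintype.card V - #A) := by
  rw [cutEdges, card_image_of_injOn, card_product, card_compl]
  rintro ⟨a, b⟩ hab ⟨c, d⟩ hcd he
  rw [coe_product, Set.mem_prod, coe_compl, Set.mem_compl_iff] at hab hcd
  rcases Sym2.eq_iff.mp he with ⟨rfl, rfl⟩ | ⟨rfl, rfl⟩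
  · rfl
  · exact absurd hab.1 hcd.2

theorem card_cutEdges_le_card_sdiff (h : 4 * #A + 4 ≤ Fintype.card V) :
    #(cutEdges A) ≤ #((⊤ : SimpleGraph V).edgeFinset \ cutEdges A) := by
  rw [card_sdiff_of_subset cutEdges_subset_edgeFinset_top, card_edgeFinset_top_eq_card_choose_two,
    Nat.choose_two_right, card_cutEdges]
  obtain ⟨t, ht⟩ := Nat.exists_eq_add_of_le h
  have hquad : 4 * (#A * (Fintype.card V - #A)) ≤ Fintype.card V * (Fintype.card V - 1) := by
    rw [ht, show 4 * #A + 4 + t - #A = 3 * #A + 4 + t by omega,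
      show 4 * #A + 4 + t - 1 = 4 * #A + 3 + t by omega]
    nlinarith
  omega

end SimpleGraph

theorem card_filter_range_mem_le_of_injOn {V : Type*} [DecidableEq V] {g : ℕ → V} {N : ℕ}
    (hg : Set.InjOn g (Set.Iio N)) (A : Finset V) : #{i ∈ range N | g i ∈ A} ≤ #A :=
  card_le_card_of_injOn g (fun _ hi => (mem_filter.mp hi).2)
    (hg.mono fun _ hi => by simpa using (mem_filter.mp hi).1)

theorem Nat.injOn_add_one_mod (N : ℕ) : Set.InjOn (fun i => (i + 1) % N) (Set.Iio N) := by
  intro a ha b hb hab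
  have : a % N = b % N := Nat.ModEq.add_right_cancel' 1 hab
  rwa [Nat.mod_eq_of_lt ha, Nat.mod_eq_of_lt hb] at this

theorem Nat.mapsTo_add_one_mod (N : ℕ) :
    Set.MapsTo (fun i => (i + 1) % N) (Set.Iio N) (Set.Iio N) :=
  fun _ hi => Nat.mod_lt _ (Nat.zero_lt_of_lt hi)

open SimpleGraph in
theorem card_filter_mem_cutEdges_le {V : Type*} [Fintype V] [DecidableEq V] {f : ℕ → V} {N : ℕ}
    (hf : Set.InjOn f (Set.Iio N)) (A : Finset V) :
    #{i ∈ range N | s(f i, f ((i + 1) % N)) ∈ cutEdges A} ≤ 2 * #A := by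
  have hsucc : Set.InjOn (fun i => f ((i + 1) % N)) (Set.Iio N) :=
    hf.comp (Nat.injOn_add_one_mod N) (Nat.mapsTo_add_one_mod N)
  calc #{i ∈ range N | s(f i, f ((i + 1) % N)) ∈ cutEdges A}
      ≤ #({i ∈ range N | f i ∈ A} ∪ {i ∈ range N | f ((i + 1) % N) ∈ A}) := by
        rw [← filter_or]
        exact card_le_card (monotone_filter_right _ fun _ _ => mem_or_mem_of_mk_mem_cutEdges)
    _ ≤ #{i ∈ range N | f i ∈ A} + #{i ∈ range N | f ((i + 1) % N) ∈ A} := card_union_le _ _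
    _ ≤ 2 * #A := by
        have := card_filter_range_mem_le_of_injOn hf A
        have := card_filter_range_mem_le_of_injOn hsucc A
        omega

/-- For n ≥ 4k, k ≥ 1, there is a 2-coloring E(K_n) = R ⊔ B with
|R| = (k-1)n - (k-1)², |B| ≥ |R|, and no copy of C_{4k} with 2k edges in each color. -/
theorem stmt_3 (k n : ℕ) (hk : 1 ≤ k) (hn : 4 * k ≤ n) :
    ∃ R B : Finset (Sym2 (Fin n)), Disjoint R B ∧
      R ∪ B = (⊤ : SimpleGraph (Fin n)).edgeFinset ∧
      R.card = (k - 1) * n - (k - 1) ^ 2 ∧ R.card ≤ B.card ∧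
      ¬ ∃ f : ℕ → Fin n, Set.InjOn f (Set.Iio (4 * k)) ∧
        ((Finset.range (4 * k)).filter
          (fun i => s(f i, f ((i + 1) % (4 * k))) ∈ R)).card = 2 * k ∧
        ((Finset.range (4 * k)).filter
          (fun i => s(f i, f ((i + 1) % (4 * k))) ∈ B)).card = 2 * k := by
  set A : Finset (Fin n) := Iio ⟨k - 1, by omega⟩
  have hA : #A = k - 1 := Fin.card_Iio _
  refine ⟨SimpleGraph.cutEdges A, (⊤ : SimpleGraph (Fin n)).edgeFinset \ SimpleGraph.cutEdges A,
    disjoint_sdiff, union_sdiff_of_subset SimpleGraph.cutEdges_subset_edgeFinset_top, ?_,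
    SimpleGraph.card_cutEdges_le_card_sdiff (by simp only [hA, Fintype.card_fin]; omega), ?_⟩
  · rw [SimpleGraph.card_cutEdges, hA, Fintype.card_fin, Nat.mul_sub, sq]
  · rintro ⟨f, hf, hR, -⟩
    have := card_filter_mem_cutEdges_le hf A
    omega
end

section
/- Let k ≥ 1 and n ≥ 4k. In the 2-coloring of K_n obtained by partitioning V(K_n) = V₁ ⊔ V₂ with |V₁| = k-1, coloring edges between V₁ and V₂ red and all other edges blue, every cycle of length 4k contains at most 2k - 2 red edges. -/
/-!
A red edge of the cycle has exactly one endpoint in `V₁`, and the cycle visits each of the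
at most `k - 1` vertices of `V₁` once, through two of its edges. Hence it has at most
`2 (k - 1)` red edges.
-/

open Finset

theorem Nat.succ_mod_injOn (m : ℕ) : Set.InjOn (fun i => (i + 1) % m) (Set.Iio m) :=
  fun _ hi _ hj hij => (Nat.ModEq.add_right_cancel' 1 hij).eq_of_lt_of_lt hi hj

section CyclicSequence

variable (p : ℕ → Prop) [DecidablePred p] (m : ℕ)

theorem card_filter_succ_mod_le :
    #{i ∈ range m | p ((i + 1) % m)} ≤ #{i ∈ range m | p i} := by
  refine card_le_card_of_injOn (fun i => (i + 1) % m) (fun i hi => ?_) ?_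
  · obtain ⟨hi, hpi⟩ := mem_filter.mp hi
    exact mem_filter.mpr ⟨mem_range.mpr (Nat.mod_lt _ (Nat.zero_lt_of_lt (mem_range.mp hi))), hpi⟩
  · exact (Nat.succ_mod_injOn m).mono fun i hi => mem_range.mp (mem_filter.mp hi).1

/-- A position where `p` changes along the cyclic sequence `0, 1, …, m - 1` is either a
position where `p` holds, or the one just before such a position. -/
theorem card_filter_cyclic_change_le_two_mul :
    #{i ∈ range m | (p i ∧ ¬p ((i + 1) % m)) ∨ (¬p i ∧ p ((i + 1) % m))} ≤
      2 * #{i ∈ range m | p i} := by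
  have hsub : {i ∈ range m | (p i ∧ ¬p ((i + 1) % m)) ∨ (¬p i ∧ p ((i + 1) % m))} ⊆
      {i ∈ range m | p i} ∪ {i ∈ range m | p ((i + 1) % m)} := by
    intro i
    simp only [mem_filter, mem_union]
    tauto
  calc _ ≤ #({i ∈ range m | p i} ∪ {i ∈ range m | p ((i + 1) % m)}) := card_le_card hsub
    _ ≤ #{i ∈ range m | p i} + #{i ∈ range m | p ((i + 1) % m)} := card_union_le _ _
    _ ≤ 2 * #{i ∈ range m | p i} := by
      have := card_filter_succ_mod_le p m
      omega

end CyclicSequence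

theorem card_filter_mem_le_of_injOn {α : Type*} [DecidableEq α] {f : ℕ → α} {m : ℕ} (s : Finset α)
    (hf : Set.InjOn f (Set.Iio m)) : #{i ∈ range m | f i ∈ s} ≤ #s :=
  card_le_card_of_injOn f (fun _ hi => (mem_filter.mp hi).2)
    (hf.mono fun _ hi => mem_range.mp (mem_filter.mp hi).1)

theorem stmt_4_general (k n : ℕ)
    (V₁ : Finset (Fin n)) (hV₁ : V₁.card = k - 1)
    (f : ℕ → Fin n) (hf : Set.InjOn f (Set.Iio (4 * k))) :
    ((Finset.range (4 * k)).filter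
      (fun i => (f i ∈ V₁ ∧ f ((i + 1) % (4 * k)) ∉ V₁) ∨
                (f i ∉ V₁ ∧ f ((i + 1) % (4 * k)) ∈ V₁))).card ≤ 2 * k - 2 := by
  calc _ ≤ 2 * #{i ∈ range (4 * k) | f i ∈ V₁} :=
        card_filter_cyclic_change_le_two_mul (fun i => f i ∈ V₁) (4 * k)
    _ ≤ 2 * #V₁ := Nat.mul_le_mul_left 2 (card_filter_mem_le_of_injOn V₁ hf)
    _ = 2 * k - 2 := by omega

/-- In the coloring where red edges are exactly those between V₁
(of size k-1) and its complement, every cycle of length 4k has at most 2k-2 red edges. -/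
theorem stmt_4 (k n : ℕ) (hk : 1 ≤ k) (hn : 4 * k ≤ n)
    (V₁ : Finset (Fin n)) (hV₁ : V₁.card = k - 1)
    (f : ℕ → Fin n) (hf : Set.InjOn f (Set.Iio (4 * k))) :
    ((Finset.range (4 * k)).filter
      (fun i => (f i ∈ V₁ ∧ f ((i + 1) % (4 * k)) ∉ V₁) ∨
                (f i ∉ V₁ ∧ f ((i + 1) % (4 * k)) ∈ V₁))).card ≤ 2 * k - 2 :=
  stmt_4_general k n V₁ hV₁ f hf
end

section
/- Let G be a graph on n vertices whose edge set is partitioned into V(G) = X ∪ Y with all edges inside X colored red, all edges inside Y and between X and Y colored blue, except that a set M of edges inside Y spanning a graph of girth at least 6 is bicolored (belongs to both color classes). Then no copy of K₅ in G admits a partition of its 10 edges into 5 red-available and 5 blue-available edges; i.e., there is no balanced copy of K₅. -/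
/-- `G` contains a cycle of length `m`. -/
def HasNCycle {V : Type} (G : SimpleGraph V) (m : ℕ) : Prop :=
  ∃ f : ℕ → V, Set.InjOn f (Set.Iio m) ∧ ∀ i < m, G.Adj (f i) (f ((i + 1) % m))

/-!
Let `x` of the five vertices lie in `X` and `y = 5 - x` in `Y`. The `C(x, 2)` edges inside `X`
are available only in red, so `C(x, 2) ≤ 5` and `x ≤ 3`, whence `y ≥ 2`. Every other
red-available edge is a bicoloured edge between two of the `y` vertices in `Y`; since `M` has no
cycle of length at most `5`, these edges form a forest, so there are at most `y - 1` of them.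
Hence at most `C(x, 2) + 4 - x ≤ 4` edges can be red, one short of a balanced split.
-/

open Finset SimpleGraph

namespace SimpleGraph

variable {V W : Type}

theorem IsAcyclic.card_edgeFinset_add_one_le [Fintype V] [Nonempty V] {G : SimpleGraph V}
    [Fintype G.edgeSet] (hG : G.IsAcyclic) : #G.edgeFinset + 1 ≤ Fintype.card V := by
  classical
  obtain ⟨T, hGT, -, hT⟩ := connected_top.exists_isTree_le_of_le_of_isAcyclic le_top hG
  rw [← hT.card_edgeFinset]
  gcongr

theorem Walk.IsCycle.hasNCycle {G : SimpleGraph V} {u : V} {c : G.Walk u u} (hc : c.IsCycle) :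
    HasNCycle G c.length := by
  refine ⟨c.getVert, fun i hi j hj => hc.getVert_injOn' (by grind) (by grind), fun i hi => ?_⟩
  have hwrap : c.getVert ((i + 1) % c.length) = c.getVert (i + 1) := by
    rcases (Nat.succ_le_of_lt hi).lt_or_eq with h | h
    · rw [Nat.mod_eq_of_lt h]
    · rw [show i + 1 = c.length from h, Nat.mod_self, getVert_zero, getVert_length]
  exact hwrap ▸ c.adj_getVert_succ hi

theorem Walk.IsCycle.length_le_card [Fintype V] {G : SimpleGraph V} {u : V} {c : G.Walk u u}
    (hc : c.IsCycle) : c.length ≤ Fintype.card V := by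
  have := hc.isPath_tail.length_lt
  rw [← c.length_tail_add_one hc.not_nil]
  omega

theorem HasNCycle.map {G : SimpleGraph V} {G' : SimpleGraph W} {m : ℕ} (φ : G →g G')
    (hφ : Function.Injective φ) (h : HasNCycle G m) : HasNCycle G' m := by
  obtain ⟨f, hf, hadj⟩ := h
  exact ⟨φ ∘ f, hφ.comp_injOn hf, fun i hi => φ.map_adj (hadj i hi)⟩

theorem isAcyclic_induce_of_forall_not_hasNCycle {G : SimpleGraph V} {k : ℕ} {s : Finset V}
    (hG : ∀ m, 3 ≤ m → m ≤ k → ¬ HasNCycle G m) (hs : #s ≤ k) :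
    (G.induce (s : Set V)).IsAcyclic := by
  intro u c hc
  refine hG c.length hc.three_le_length ?_ (hc.hasNCycle.map (Embedding.induce (G := G) _).toHom
    (Embedding.induce (G := G) _).injective)
  have := hc.length_le_card
  simp only [SetLike.coe_sort_coe, Fintype.card_coe] at this
  omega

end SimpleGraph

theorem image_mk_offDiag_image_of_injective {α β : Type*} [DecidableEq α] [DecidableEq β]
    {f : α → β} (hf : Function.Injective f) (s : Finset α) :
    s.offDiag.image (fun p => s(f p.1, f p.2)) = (s.image f).offDiag.image Sym2.mk.uncurry := by
  ext e
  simp only [mem_image, mem_offDiag, Prod.exists, Function.uncurry_apply_pair]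
  constructor
  · rintro ⟨a, b, ⟨ha, hb, hab⟩, rfl⟩
    exact ⟨f a, f b, ⟨⟨a, ha, rfl⟩, ⟨b, hb, rfl⟩, hf.ne hab⟩, rfl⟩
  · rintro ⟨_, _, ⟨⟨a, ha, rfl⟩, ⟨b, hb, rfl⟩, hab⟩, rfl⟩
    exact ⟨a, b, ⟨ha, hb, fun h => hab (h ▸ rfl)⟩, rfl⟩

section TwoListColoring

variable {V : Type*} [DecidableEq V] {U X : Finset V} {E₁ E₂ : Finset (Sym2 V)}

theorem image_mk_offDiag_inter_subset_of_union_eq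
    (hunion : E₁ ∪ E₂ = U.offDiag.image Sym2.mk.uncurry) (hE₂ : ∀ e ∈ E₂, ¬ ∀ v ∈ e, v ∈ X) :
    (U ∩ X).offDiag.image Sym2.mk.uncurry ⊆ E₁ := by
  intro e he
  have heU : e ∈ E₁ ∪ E₂ :=
    hunion ▸ image_subset_image (offDiag_mono inter_subset_left) he
  obtain ⟨⟨u, v⟩, huv, rfl⟩ := mem_image.1 he
  simp only [mem_offDiag, mem_inter] at huv
  refine (mem_union.1 heU).resolve_right fun h => hE₂ _ h ?_
  simp only [Function.uncurry_apply_pair, Sym2.mem_iff]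
  rintro w (rfl | rfl) <;> tauto

theorem card_le_choose_add_card_edgeFinset_induce {M : SimpleGraph V} [DecidableRel M.Adj]
    (hMY : ∀ u v, M.Adj u v → u ∉ X ∧ v ∉ X) (hE₁U : E₁ ⊆ U.offDiag.image Sym2.mk.uncurry)
    (hE₁ : ∀ e ∈ E₁, (∀ v ∈ e, v ∈ X) ∨ e ∈ M.edgeSet) :
    #E₁ ≤ (#(U ∩ X)).choose 2 + #(M.induce (U \ X : Finset V)).edgeFinset := by
  have hcover : E₁ ⊆ (U ∩ X).offDiag.image Sym2.mk.uncurry ∪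
      (M.induce (U \ X : Finset V)).edgeFinset.map (Function.Embedding.subtype _).sym2Map := by
    intro e he
    obtain ⟨⟨u, v⟩, huv, rfl⟩ := mem_image.1 (hE₁U he)
    simp only [mem_offDiag] at huv
    rcases hE₁ _ he with hX | hM
    · refine mem_union_left _ (mem_image.2 ⟨(u, v), ?_, rfl⟩)
      simp only [Function.uncurry_apply_pair, Sym2.mem_iff] at hX
      simp [huv, hX]
    · obtain ⟨hu, hv⟩ := hMY u v hM
      refine mem_union_right _
        (mem_map.2 ⟨s(⟨u, by simp [huv, hu]⟩, ⟨v, by simp [huv, hv]⟩), ?_, rfl⟩)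
      simpa using hM
  calc #E₁ ≤ _ := card_le_card hcover
    _ ≤ _ := card_union_le _ _
    _ = _ := by rw [Sym2.card_image_offDiag, card_map]

end TwoListColoring

/-- In the 2-list coloring of K_n where edges inside X are red, edges
of a girth-≥6 graph M inside Y = Xᶜ are bicolored, and all other edges are blue,
there is no balanced copy of K₅ (no copy of K₅ whose 10 edges split into 5
red-available and 5 blue-available edges). -/
theorem stmt_15 (n : ℕ) (X : Finset (Fin n)) (M : SimpleGraph (Fin n))
    (hMY : ∀ u v, M.Adj u v → u ∉ X ∧ v ∉ X)
    (hM3 : ¬ HasNCycle M 3) (hM4 : ¬ HasNCycle M 4) (hM5 : ¬ HasNCycle M 5) :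
    ¬ ∃ (f : Fin 5 → Fin n) (E₁ E₂ : Finset (Sym2 (Fin n))),
        Function.Injective f ∧ Disjoint E₁ E₂ ∧
        E₁ ∪ E₂ = Finset.image (fun p : Fin 5 × Fin 5 => s(f p.1, f p.2))
          Finset.univ.offDiag ∧
        E₁.card = 5 ∧ E₂.card = 5 ∧
        (∀ e ∈ E₁, (∀ v ∈ e, v ∈ X) ∨ e ∈ M.edgeSet) ∧
        (∀ e ∈ E₂, ¬ (∀ v ∈ e, v ∈ X)) := by
  classical
  rintro ⟨f, E₁, E₂, hf, -, hunion, h₁, -, hE₁, hE₂⟩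
  rw [image_mk_offDiag_image_of_injective hf] at hunion
  set U := univ.image f
  have hsplit : #(U ∩ X) + #(U \ X) = 5 := by
    rw [card_inter_add_card_sdiff, card_image_of_injective _ hf, card_univ, Fintype.card_fin]
  have hX : (#(U ∩ X)).choose 2 ≤ 5 := by
    rw [← h₁, ← Sym2.card_image_offDiag]
    exact card_le_card (image_mk_offDiag_inter_subset_of_union_eq hunion hE₂)
  have hX3 : #(U ∩ X) ≤ 3 := by
    by_contra! h
    have : Nat.choose 4 2 ≤ (#(U ∩ X)).choose 2 := Nat.choose_le_choose 2 h
    simp only [Nat.choose_two_right] at this hX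
    omega
  have hacyc : (M.induce (U \ X : Finset (Fin n))).IsAcyclic := by
    refine isAcyclic_induce_of_forall_not_hasNCycle (k := 5) (fun m h3 h5 hm => ?_) (by omega)
    interval_cases m <;> contradiction
  have : Nonempty (U \ X : Finset (Fin n)) := (card_pos.1 (by omega)).to_subtype
  have hY : #(M.induce (U \ X : Finset (Fin n))).edgeFinset + 1 ≤ #(U \ X) := by
    simpa only [SetLike.coe_sort_coe, Fintype.card_coe] using hacyc.card_edgeFinset_add_one_le
  have hE : 5 ≤ (#(U ∩ X)).choose 2 + #(M.induce (U \ X : Finset (Fin n))).edgeFinset :=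
    h₁ ▸ card_le_choose_add_card_edgeFinset_induce hMY (hunion ▸ subset_union_left) hE₁
  interval_cases #(U ∩ X) <;> simp only [Nat.choose_two_right] at hE <;> omega
end

section
/- Let k ≥ 1 and let K_{2t} (t ≥ 3k+1) have its edges 2-colored with vertex partition X ⊔ Y, |X| = |Y| = t, such that all edges inside X are red and all edges inside Y and between X and Y are blue. Then K_{2t} contains a (4k+2)-cycle with exactly 2k+1 red edges and 2k+1 blue edges. -/
/-!
Place the vertices of the cycle so that an arc of `2k + 2` consecutive vertices lies in `X` and
the remaining `2k` vertices lie outside `X`. Then exactly the `2k + 1` edges inside the arc are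
red, and the `2k + 1` other edges of the cycle are blue; `t ≥ 3k + 1` leaves room in both parts.
-/

open Finset

namespace Finset

variable {α : Type*}

theorem exists_injOn_Iio_mem_iff_lt [Fintype α] [DecidableEq α] {s : Finset α} {m n : ℕ}
    (hm : 0 < m) (hs : m ≤ #s) (hsc : n - m ≤ #sᶜ) :
    ∃ g : ℕ → α, Set.InjOn g (Set.Iio n) ∧ ∀ i < n, (g i ∈ s ↔ i < m) := by
  obtain ⟨a⟩ : Nonempty (Fin m ↪ s) :=
    Function.Embedding.nonempty_of_card_le (by simpa using hs)
  obtain ⟨b⟩ : Nonempty (Fin (n - m) ↪ (sᶜ : Finset α)) :=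
    Function.Embedding.nonempty_of_card_le (by rwa [Fintype.card_fin, Fintype.card_coe])
  let g : ℕ → α := fun i =>
    if h : i < m then a ⟨i, h⟩ else if h' : i - m < n - m then b ⟨i - m, h'⟩ else a ⟨0, hm⟩
  have hmem : ∀ i < n, (g i ∈ s ↔ i < m) := by
    intro i hi
    by_cases him : i < m
    · simp only [g, him, dif_pos, coe_mem]
    · have hb : i - m < n - m := by omega
      simp only [g, him, hb, dif_neg, dif_pos, not_false_eq_true, iff_false, ← mem_compl]
      exact (b _).2
  refine ⟨g, fun i hi j hj hij => ?_, hmem⟩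
  have hside : i < m ↔ j < m := by rw [← hmem i hi, ← hmem j hj, hij]
  by_cases him : i < m
  · have hjm := hside.1 him
    simp only [g, him, hjm, dif_pos] at hij
    simpa using a.injective (Subtype.ext hij)
  · have hjm : ¬ j < m := fun h => him (hside.2 h)
    have hib : i - m < n - m := by simp only [Set.mem_Iio] at hi; omega
    have hjb : j - m < n - m := by simp only [Set.mem_Iio] at hj; omega
    simp only [g, him, hjm, hib, hjb, dif_pos, dif_neg, not_false_eq_true] at hij
    have := congrArg Fin.val (b.injective (Subtype.ext hij))
    simp only at this
    omega

theorem card_filter_range_and_succ_mod {P : ℕ → Prop} [DecidablePred P] {m n : ℕ}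
    (hm : 0 < m) (hmn : m < n) (hP : ∀ i < n, (P i ↔ i < m)) :
    #{i ∈ range n | P i ∧ P ((i + 1) % n)} = m - 1 := by
  suffices {i ∈ range n | P i ∧ P ((i + 1) % n)} = range (m - 1) by rw [this, card_range]
  ext i
  simp only [mem_filter, mem_range]
  by_cases hi : i < n
  · rw [hP i hi, hP _ (Nat.mod_lt _ (by omega))]
    rcases Nat.lt_or_ge (i + 1) n with hsucc | hlast
    · rw [Nat.mod_eq_of_lt hsucc]; omega
    · omega
  · omega

end Finset

/-- In K_{2t} (t ≥ 3k+1) 2-colored with X ⊔ Y, |X| = |Y| = t, all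
edges inside X red, all other edges blue, there is a (4k+2)-cycle with exactly
2k+1 red and 2k+1 blue edges. -/
theorem stmt_17 (k t : ℕ) (hk : 1 ≤ k) (ht : 3 * k + 1 ≤ t)
    (X : Finset (Fin (2 * t))) (hX : X.card = t) :
    ∃ g : ℕ → Fin (2 * t), Set.InjOn g (Set.Iio (4 * k + 2)) ∧
      ((Finset.range (4 * k + 2)).filter
        (fun i => g i ∈ X ∧ g ((i + 1) % (4 * k + 2)) ∈ X)).card = 2 * k + 1 ∧
      ((Finset.range (4 * k + 2)).filter
        (fun i => ¬ (g i ∈ X ∧ g ((i + 1) % (4 * k + 2)) ∈ X))).card = 2 * k + 1 := by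
  have hXc : #Xᶜ = t := by rw [card_compl, hX, Fintype.card_fin]; omega
  obtain ⟨g, hinj, hmem⟩ := exists_injOn_Iio_mem_iff_lt (s := X) (m := 2 * k + 2) (n := 4 * k + 2)
    (by omega) (by omega) (by omega)
  have hred := card_filter_range_and_succ_mod (P := (g · ∈ X)) (by omega) (by omega) hmem
  have htotal := card_filter_add_card_filter_not (s := range (4 * k + 2))
    (p := fun i => g i ∈ X ∧ g ((i + 1) % (4 * k + 2)) ∈ X)
  rw [card_range] at htotal
  exact ⟨g, hinj, by omega, by omega⟩
end

section
/- Let k ≥ 1, t ≥ 3k+1, and consider K_{2t} with vertex partition X ⊔ Y, |X| = |Y| = t, where all edges within X and within Y are red and all edges between X and Y are blue, except one edge e = uv with u,v ∈ X which is bicolored (may be used as red or blue). Then there is a (4k+2)-cycle through e which, choosing e blue, has exactly 2k+1 red edges and 2k+1 blue edges. -/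
/-!
The cycle is `u, v, y₀, …, y_{2k+1}, x₁, y'₁, …, x_{k-1}, y'_{k-1}` (back to `u`), with the `yⱼ`,
`y'ⱼ` in `Y = Xᶜ` and the `xⱼ` in `X \ {u, v}`. Its edges other than `uv` are `vy₀` (blue), the
`2k+1` red edges of the path `y₀ … y_{2k+1}` and the `2k-1` blue edges of the alternating tail.
Only the side of each vertex matters for the colours, and the cycle uses `3k+1 ≤ t` vertices of
`Y` and `k-1 ≤ t-2` vertices of `X \ {u, v}`, so it can be embedded injectively.
-/

open Finset

theorem Finset.exists_mapsTo_injOn_of_card_le {α β : Type*} [Nonempty β] (s : Finset α)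
    (t : Finset β) (h : #s ≤ #t) : ∃ f : α → β, Set.MapsTo f s t ∧ Set.InjOn f s :=
  s.finite_toSet.exists_injOn_of_encard_le (t := (t : Set β)) (by simpa using h)

theorem Finset.exists_injOn_mem_ite_of_card_filter_le {ι α : Type*} [Nonempty α] (I : Finset ι)
    (P : ι → Prop) [DecidablePred P] {A B : Finset α} (hAB : Disjoint A B)
    (hA : #(I.filter P) ≤ #A) (hB : #(I.filter (¬P ·)) ≤ #B) :
    ∃ g : ι → α, Set.InjOn g I ∧ ∀ i ∈ I, g i ∈ if P i then A else B := by
  obtain ⟨f, hfA, hf⟩ := (I.filter P).exists_mapsTo_injOn_of_card_le A hA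
  obtain ⟨f', hf'B, hf'⟩ := (I.filter (¬P ·)).exists_mapsTo_injOn_of_card_le B hB
  have mem (i) (hi : i ∈ I) : (if P i then f i else f' i) ∈ if P i then A else B := by
    split_ifs with hP
    · exact hfA (by simp [hi, hP])
    · exact hf'B (by simp [hi, hP])
  refine ⟨fun i => if P i then f i else f' i, fun i hi j hj hij => ?_, mem⟩
  have hi' := mem i hi
  have hj' := mem j hj
  simp only [Finset.mem_coe] at hi hj
  dsimp only at hij
  split_ifs at hij hi' hj' with hPi hPj hPj
  · exact hf (by simp [hi, hPi]) (by simp [hj, hPj]) hij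
  · exact absurd (hij ▸ hi') (disjoint_right.mp hAB hj')
  · exact absurd (hij ▸ hi') (disjoint_left.mp hAB hj')
  · exact hf' (by simp [hi, hPi]) (by simp [hj, hPj]) hij

theorem Set.injOn_Iio_ite_of_injOn_Ico_two {α : Type*} {n : ℕ} {u v : α} {g : ℕ → α}
    (huv : u ≠ v) (hg : Set.InjOn g (Set.Ico 2 n)) (hgu : ∀ i ∈ Set.Ico 2 n, g i ≠ u ∧ g i ≠ v) :
    Set.InjOn (fun i => if i = 0 then u else if i = 1 then v else g i) (Set.Iio n) := by
  intro i hi j hj hij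
  dsimp only at hij
  split_ifs at hij <;> grind [Set.InjOn]

namespace TypeBCycle

/-- Whether position `i` of the cycle above lies in `X`. -/
def InX (k i : ℕ) : Prop := i ≤ 1 ∨ 2 * k + 4 ≤ i ∧ i % 2 = 0

instance (k : ℕ) : DecidablePred (InX k) := fun _ => inferInstanceAs (Decidable (_ ∨ _))

theorem filter_inX_Ico (k : ℕ) :
    (Ico 2 (4 * k + 2)).filter (InX k) = (Ico (k + 2) (2 * k + 1)).image (2 * ·) := by
  ext i
  simp only [InX, mem_filter, mem_Ico, mem_image]
  constructor
  · rintro ⟨hi, h⟩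
    exact ⟨i / 2, by omega, by omega⟩
  · rintro ⟨a, ha, rfl⟩
    omega

theorem card_filter_inX_Ico (k : ℕ) : #((Ico 2 (4 * k + 2)).filter (InX k)) = k - 1 := by
  rw [filter_inX_Ico, card_image_of_injective _ (mul_right_injective₀ two_ne_zero),
    Nat.card_Ico]
  omega

theorem card_filter_not_inX_Ico {k : ℕ} (hk : 1 ≤ k) :
    #((Ico 2 (4 * k + 2)).filter (¬InX k ·)) = 3 * k + 1 := by
  have := card_filter_add_card_filter_not (s := Ico 2 (4 * k + 2)) (p := InX k)
  rw [card_filter_inX_Ico, Nat.card_Ico] at this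
  omega

theorem filter_inX_iff_inX_succ {k : ℕ} (hk : 1 ≤ k) :
    ((range (4 * k + 2)).erase 0).filter (fun i => InX k i ↔ InX k ((i + 1) % (4 * k + 2))) =
      Icc 2 (2 * k + 2) := by
  ext i
  simp only [mem_filter, mem_erase, mem_range, mem_Icc]
  unfold InX
  rcases lt_trichotomy i (4 * k + 1) with hi | rfl | hi
  · rw [Nat.mod_eq_of_lt (a := i + 1) (by omega)]
    omega
  · rw [show (4 * k + 1 + 1) % (4 * k + 2) = 0 from Nat.mod_self _]
    omega
  · omega

theorem card_filter_mem_iff_mem_succ {α : Type*} [DecidableEq α] {k : ℕ} (hk : 1 ≤ k)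
    {X : Finset α} {g : ℕ → α} (hg : ∀ i < 4 * k + 2, g i ∈ X ↔ InX k i) :
    #(((range (4 * k + 2)).erase 0).filter
        (fun i => (g i ∈ X ↔ g ((i + 1) % (4 * k + 2)) ∈ X))) = 2 * k + 1 ∧
      #(((range (4 * k + 2)).erase 0).filter
        (fun i => ¬(g i ∈ X ↔ g ((i + 1) % (4 * k + 2)) ∈ X))) = 2 * k := by
  have hsame : ((range (4 * k + 2)).erase 0).filter
      (fun i => (g i ∈ X ↔ g ((i + 1) % (4 * k + 2)) ∈ X)) = Icc 2 (2 * k + 2) := by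
    rw [← filter_inX_iff_inX_succ hk]
    refine filter_congr fun i hi => ?_
    rw [hg i (mem_range.mp (mem_of_mem_erase hi)), hg _ (Nat.mod_lt _ (by omega))]
  have htotal := card_filter_add_card_filter_not (s := (range (4 * k + 2)).erase 0)
    (p := fun i => (g i ∈ X ↔ g ((i + 1) % (4 * k + 2)) ∈ X))
  rw [hsame, Nat.card_Icc, card_erase_of_mem (by simp), card_range] at htotal
  rw [hsame, Nat.card_Icc]
  omega

theorem exists_injOn_Ico_mem_iff_inX {α : Type*} [Fintype α] [DecidableEq α] {k : ℕ}
    (hk : 1 ≤ k) {X : Finset α} {u v : α} (hu : u ∈ X) (hv : v ∈ X) (huv : u ≠ v)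
    (hX : k + 1 ≤ #X) (hXc : 3 * k + 1 ≤ #Xᶜ) :
    ∃ g : ℕ → α, Set.InjOn g (Set.Ico 2 (4 * k + 2)) ∧
      ∀ i ∈ Set.Ico 2 (4 * k + 2), (g i ∈ X ↔ InX k i) ∧ g i ≠ u ∧ g i ≠ v := by
  have : Nonempty α := ⟨u⟩
  have hXuv : #(X \ {u, v}) = #X - 2 := by
    rw [card_sdiff_of_subset (insert_subset hu (singleton_subset_iff.mpr hv)), card_pair huv]
  obtain ⟨g, hinj, hmem⟩ := (Ico 2 (4 * k + 2)).exists_injOn_mem_ite_of_card_filter_le (InX k)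
    (disjoint_compl_right.mono_left sdiff_subset)
    (by rw [card_filter_inX_Ico, hXuv]; omega) (by rw [card_filter_not_inX_Ico hk]; omega)
  refine ⟨g, by simpa using hinj, fun i hi => ?_⟩
  have := hmem i (by simpa using hi)
  split_ifs at this with h
  · simp only [mem_sdiff, mem_insert, mem_singleton, not_or] at this
    exact ⟨iff_of_true this.1 h, this.2⟩
  · rw [mem_compl] at this
    exact ⟨iff_of_false this h, fun h => this (h ▸ hu), fun h => this (h ▸ hv)⟩

end TypeBCycle

open TypeBCycle in
/-- In K_{2t} (t ≥ 3k+1, k ≥ 1) with partition X ⊔ Y, |X| = |Y| = t,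
edges within X and within Y red, edges across blue, and one bicolored edge
e = uv inside X, there is a (4k+2)-cycle through e which, taking e blue, has
exactly 2k+1 red and 2k+1 blue edges (i.e. apart from e, exactly 2k+1 red edges
and 2k blue edges). -/
theorem stmt_18 (k t : ℕ) (hk : 1 ≤ k) (ht : 3 * k + 1 ≤ t)
    (X : Finset (Fin (2 * t))) (hX : X.card = t)
    (u v : Fin (2 * t)) (hu : u ∈ X) (hv : v ∈ X) (huv : u ≠ v) :
    ∃ g : ℕ → Fin (2 * t), Set.InjOn g (Set.Iio (4 * k + 2)) ∧
      g 0 = u ∧ g 1 = v ∧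
      (((Finset.range (4 * k + 2)).erase 0).filter
        (fun i => (g i ∈ X ↔ g ((i + 1) % (4 * k + 2)) ∈ X))).card = 2 * k + 1 ∧
      (((Finset.range (4 * k + 2)).erase 0).filter
        (fun i => ¬ (g i ∈ X ↔ g ((i + 1) % (4 * k + 2)) ∈ X))).card = 2 * k := by
  obtain ⟨g, hinj, hside⟩ := exists_injOn_Ico_mem_iff_inX hk hu hv huv (by omega)
    (by rw [card_compl, hX, Fintype.card_fin]; omega)
  refine ⟨fun i => if i = 0 then u else if i = 1 then v else g i,
    Set.injOn_Iio_ite_of_injOn_Ico_two huv hinj (fun i hi => (hside i hi).2), rfl, rfl,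
    card_filter_mem_iff_mem_succ hk fun i hi => ?_⟩
  split_ifs with h0 h1
  · simp [hu, InX, h0]
  · simp [hv, InX, h1]
  · exact (hside i ⟨by omega, hi⟩).1
end
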